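/- arXiv:math/0509332 — 2 statements merged into one kernel-verified Lean document; each statement's English description precedes it below -/
import Mathlib

section
/- Suppose χ ∈ C³(Ω ∪ Γ) solves c²Δχ − Σ_{i,j} χ_i χ_j χ_{ij} = |∇χ|² − d·c² in Ω with c² = (1−γ)(χ + |∇χ|²/2) > 0 on Ω ∪ Γ, and satisfies the slip condition χ_1 = 0 on Γ (by continuity the PDE holds on Γ). Then the third derivative χ_{111} vanishes on Γ. -/
open scoped BigOperators Topology

noncomputable def pd {d : ℕ} (f : EuclideanSpace ℝ (Fin d) → ℝ) (i : Fin d)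
    (x : EuclideanSpace ℝ (Fin d)) : ℝ :=
  fderiv ℝ f x (EuclideanSpace.single i 1)

noncomputable def gradSq {d : ℕ} (f : EuclideanSpace ℝ (Fin d) → ℝ)
    (x : EuclideanSpace ℝ (Fin d)) : ℝ :=
  ∑ i, (pd f i x) ^ 2

noncomputable def c2 {d : ℕ} (γ : ℝ) (f : EuclideanSpace ℝ (Fin d) → ℝ)
    (x : EuclideanSpace ℝ (Fin d)) : ℝ :=
  (1 - γ) * (f x + gradSq f x / 2)

def SolvesSSPF {d : ℕ} (γ : ℝ) (f : EuclideanSpace ℝ (Fin d) → ℝ)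
    (x : EuclideanSpace ℝ (Fin d)) : Prop :=
  c2 γ f x * (∑ i, pd (pd f i) i x)
    - ∑ i, ∑ j, pd f i x * pd f j x * pd (pd f i) j x
    = gradSq f x - d * c2 γ f x

noncomputable def pdW {d : ℕ} (S : Set (EuclideanSpace ℝ (Fin d)))
    (f : EuclideanSpace ℝ (Fin d) → ℝ) (i : Fin d)
    (x : EuclideanSpace ℝ (Fin d)) : ℝ :=
  fderivWithin ℝ f S x (EuclideanSpace.single i 1)

theorem stmt11_chi111_zero_on_wall
    (d : ℕ) (γ : ℝ) (hγ : -1 < γ)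
    (z : EuclideanSpace ℝ (Fin (d + 2))) (hz : z 0 = 0) (r : ℝ) (hr : 0 < r)
    (U Ω Γ S : Set (EuclideanSpace ℝ (Fin (d + 2))))
    (hU : U = Metric.ball z r)
    (hΩ : Ω = {x ∈ U | 0 < x 0}) (hΓ : Γ = {x ∈ U | x 0 = 0}) (hS : S = Ω ∪ Γ)
    (χ : EuclideanSpace ℝ (Fin (d + 2)) → ℝ)
    (hχ : ContDiffOn ℝ 3 χ S)
    (c2f : EuclideanSpace ℝ (Fin (d + 2)) → ℝ)
    (hc2f : c2f = fun y => (1 - γ) * (χ y + (∑ i, (pdW S χ i y) ^ 2) / 2))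
    (hc2pos : ∀ x ∈ S, 0 < c2f x)
    (hpde : ∀ x ∈ S,
      c2f x * (∑ i, pdW S (pdW S χ i) i x)
        - ∑ i, ∑ j, pdW S χ i x * pdW S χ j x * pdW S (pdW S χ i) j x
        = (∑ i, (pdW S χ i x) ^ 2) - ((d : ℝ) + 2) * c2f x)
    (hslip : ∀ x ∈ Γ, pdW S χ 0 x = 0) :
    ∀ x ∈ Γ, pdW S (pdW S (pdW S χ 0) 0) 0 x = 0 := by
  -- ## Basic set facts
  have hSS : S = Metric.ball z r ∩ {x : EuclideanSpace ℝ (Fin (d + 2)) | 0 ≤ x 0} := by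
    rw [hS, hΩ, hΓ, hU]
    ext y
    simp only [Set.mem_union, Set.mem_setOf_eq, Set.mem_inter_iff, Set.sep_setOf,
      Set.mem_setOf_eq]
    constructor
    · rintro (⟨h1, h2⟩ | ⟨h1, h2⟩)
      · exact ⟨h1, h2.le⟩
      · exact ⟨h1, h2.ge⟩
    · rintro ⟨h1, h2⟩
      rcases h2.lt_or_eq with h | h
      · exact Or.inl ⟨h1, h⟩
      · exact Or.inr ⟨h1, h.symm⟩
  have hΓS : Γ ⊆ S := by rw [hS]; exact Set.subset_union_right
  have hΓmem : ∀ y, y ∈ Γ ↔ y ∈ Metric.ball z r ∧ y 0 = 0 := by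
    intro y; rw [hΓ, hU]; exact Set.mem_sep_iff
  have hlin : IsLinearMap ℝ (fun y : EuclideanSpace ℝ (Fin (d + 2)) => y 0) :=
    ⟨fun _ _ => rfl, fun _ _ => rfl⟩
  have hconv : Convex ℝ S := by
    rw [hSS]; exact (convex_ball z r).inter (convex_halfSpace_ge hlin 0)
  -- interior point
  have hp_ball : z + (r / 2) • EuclideanSpace.single (0 : Fin (d + 2)) 1 ∈ Metric.ball z r := by
    rw [Metric.mem_ball, dist_eq_norm, add_sub_cancel_left, norm_smul,
      EuclideanSpace.norm_single]
    rw [Real.norm_eq_abs, abs_of_pos (by linarith)]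
    simp; linarith
  have hp0 : ((z + (r / 2) • EuclideanSpace.single (0 : Fin (d + 2)) 1 :
      EuclideanSpace ℝ (Fin (d + 2)))) 0 = r / 2 := by
    have : ((z + (r / 2) • EuclideanSpace.single (0 : Fin (d + 2)) 1 :
        EuclideanSpace ℝ (Fin (d + 2)))) 0
        = z 0 + (r / 2) * (EuclideanSpace.single (0 : Fin (d + 2)) (1 : ℝ)) 0 := rfl
    rw [this, hz, EuclideanSpace.single_apply]
    simp
  have hVopen : IsOpen (Metric.ball z r ∩ {y : EuclideanSpace ℝ (Fin (d + 2)) | 0 < y 0}) :=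
    Metric.isOpen_ball.inter
      (isOpen_lt continuous_const (EuclideanSpace.proj (0 : Fin (d + 2))).continuous)
  have hVsub : Metric.ball z r ∩ {y : EuclideanSpace ℝ (Fin (d + 2)) | 0 < y 0} ⊆ S := by
    rw [hSS]; exact Set.inter_subset_inter_right _ fun y hy => (le_of_lt hy : (0:ℝ) ≤ y 0)
  have hpint : z + (r / 2) • EuclideanSpace.single (0 : Fin (d + 2)) 1 ∈ interior S :=
    interior_maximal hVsub hVopen ⟨hp_ball, by rw [Set.mem_setOf_eq, hp0]; linarith⟩
  have hUD : UniqueDiffOn ℝ S := uniqueDiffOn_convex hconv ⟨_, hpint⟩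
  have hcl : ∀ y ∈ S, y ∈ closure (interior S) := by
    intro y hy
    set p := z + (r / 2) • EuclideanSpace.single (0 : Fin (d + 2)) 1
    apply mem_closure_of_tendsto (f := fun t : ℝ => y + t • (p - y)) (b := 𝓝[>] (0 : ℝ))
    · have h1 : Filter.Tendsto (fun t : ℝ => y + t • (p - y)) (𝓝 0)
          (𝓝 (y + (0 : ℝ) • (p - y))) :=
        (continuous_const.add (continuous_id.smul continuous_const)).tendsto 0
      simpa using h1.mono_left nhdsWithin_le_nhds
    · filter_upwards [Ioc_mem_nhdsGT zero_lt_one] with t ht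
      exact hconv.add_smul_sub_mem_interior hy hpint ht
  -- ## Regularity
  have h32 : (2 : WithTop ℕ∞) + 1 ≤ 3 := by norm_num
  have h21 : (1 : WithTop ℕ∞) + 1 ≤ 2 := by norm_num
  have hu2 : ∀ i, ContDiffOn ℝ 2 (pdW S χ i) S := fun i =>
    (hχ.fderivWithin hUD h32).clm_apply contDiffOn_const
  have hw1 : ∀ i j, ContDiffOn ℝ 1 (pdW S (pdW S χ i) j) S := fun i j =>
    ((hu2 i).fderivWithin hUD h21).clm_apply contDiffOn_const
  have dchi : ∀ y ∈ S, DifferentiableWithinAt ℝ χ S y := fun y hy =>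
    (hχ.differentiableOn (by norm_num)) y hy
  have du : ∀ i, ∀ y ∈ S, DifferentiableWithinAt ℝ (pdW S χ i) S y := fun i y hy =>
    ((hu2 i).differentiableOn (by norm_num)) y hy
  have dw : ∀ i j, ∀ y ∈ S, DifferentiableWithinAt ℝ (pdW S (pdW S χ i) j) S y := fun i j y hy =>
    ((hw1 i j).differentiableOn one_ne_zero) y hy
  -- ## Symmetry of second derivatives within S
  have hmix : ∀ g : EuclideanSpace ℝ (Fin (d + 2)) → ℝ, ContDiffOn ℝ 2 g S → ∀ y ∈ S,
      ∀ a b : EuclideanSpace ℝ (Fin (d + 2)),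
      fderivWithin ℝ (fun t => fderivWithin ℝ g S t a) S y b
        = fderivWithin ℝ (fderivWithin ℝ g S) S y b a := by
    intro g hg y hy a b
    have h1 : DifferentiableWithinAt ℝ (fderivWithin ℝ g S) S y :=
      ((hg.fderivWithin hUD h21).differentiableOn one_ne_zero) y hy
    rw [fderivWithin_clm_apply (hUD y hy) h1 (differentiableWithinAt_const a)]
    simp [fderivWithin_const_apply a]
  have hsymm : ∀ g : EuclideanSpace ℝ (Fin (d + 2)) → ℝ, ContDiffOn ℝ 2 g S → ∀ y ∈ S,
      ∀ a b : EuclideanSpace ℝ (Fin (d + 2)),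
      fderivWithin ℝ (fun t => fderivWithin ℝ g S t a) S y b
        = fderivWithin ℝ (fun t => fderivWithin ℝ g S t b) S y a := by
    intro g hg y hy a b
    rw [hmix g hg y hy a b, hmix g hg y hy b a]
    exact ((hg y hy).isSymmSndFDerivWithinAt (by simp [minSmoothness_of_isRCLikeNormedField]) hUD (hcl y hy) hy).eq b a
  -- ## Tangential derivatives of functions vanishing on Γ vanish
  have hA : ∀ g : EuclideanSpace ℝ (Fin (d + 2)) → ℝ, (∀ y ∈ Γ, g y = 0) →
      ∀ y ∈ Γ, DifferentiableWithinAt ℝ g S y → ∀ i : Fin (d + 2), i ≠ 0 →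
      fderivWithin ℝ g S y (EuclideanSpace.single i 1) = 0 := by
    intro g hg0 y hyΓ hgd i hi
    obtain ⟨hyb, hy0⟩ := (hΓmem y).1 hyΓ
    have hε : (0 : ℝ) < r - dist y z := by rw [Metric.mem_ball] at hyb; linarith
    have hmaps : ∀ t : ℝ, t ∈ Metric.ball (0 : ℝ) (r - dist y z) →
        y + t • EuclideanSpace.single i (1 : ℝ) ∈ Γ := by
      intro t ht
      rw [Metric.mem_ball, Real.dist_eq, sub_zero] at ht
      apply (hΓmem _).2
      refine ⟨?_, ?_⟩
      · rw [Metric.mem_ball]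
        have hd : dist (y + t • EuclideanSpace.single i (1 : ℝ)) y = |t| := by
          rw [dist_eq_norm, add_sub_cancel_left, norm_smul, EuclideanSpace.norm_single]
          simp [Real.norm_eq_abs]
        calc dist (y + t • EuclideanSpace.single i (1 : ℝ)) z
            ≤ dist (y + t • EuclideanSpace.single i (1 : ℝ)) y + dist y z :=
              dist_triangle _ _ _
          _ < (r - dist y z) + dist y z := by rw [hd]; linarith
          _ = r := by ring
      · have h1 : (EuclideanSpace.single i (1 : ℝ)) 0 = 0 := by
          rw [EuclideanSpace.single_apply]; simp [Ne.symm hi]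
        have h2 : (y + t • EuclideanSpace.single i (1 : ℝ)) 0
            = y 0 + t * (EuclideanSpace.single i (1 : ℝ)) 0 := rfl
        rw [h2, hy0, h1]; ring
    have hφ : HasDerivAt (fun t : ℝ => y + t • EuclideanSpace.single i (1 : ℝ))
        (EuclideanSpace.single i (1 : ℝ)) 0 := by
      simpa using ((hasDerivAt_id (0 : ℝ)).smul_const
        (EuclideanSpace.single i (1 : ℝ))).const_add y
    have hcomp : HasDerivWithinAt
        (g ∘ fun t : ℝ => y + t • EuclideanSpace.single i (1 : ℝ))
        (fderivWithin ℝ g S y (EuclideanSpace.single i 1))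
        (Metric.ball (0 : ℝ) (r - dist y z)) 0 := by
      refine HasFDerivWithinAt.comp_hasDerivWithinAt_of_eq (x := (0 : ℝ))
        hgd.hasFDerivWithinAt hφ.hasDerivWithinAt (fun t ht => hΓS (hmaps t ht)) ?_
      simp
    have h1 : HasDerivAt (g ∘ fun t : ℝ => y + t • EuclideanSpace.single i (1 : ℝ))
        (fderivWithin ℝ g S y (EuclideanSpace.single i 1)) 0 :=
      hcomp.hasDerivAt (Metric.ball_mem_nhds 0 hε)
    have h2 : HasDerivAt (g ∘ fun t : ℝ => y + t • EuclideanSpace.single i (1 : ℝ))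
        (0 : ℝ) 0 := by
      apply (hasDerivAt_const (0 : ℝ) (0 : ℝ)).congr_of_eventuallyEq
      filter_upwards [Metric.ball_mem_nhds (0 : ℝ) hε] with t ht
      exact hg0 _ (hmaps t ht)
    exact h1.unique h2
  -- ## χ_{1i} = 0 on Γ for tangential i
  have hT1 : ∀ y ∈ Γ, ∀ i : Fin (d + 2), i ≠ 0 → pdW S (pdW S χ 0) i y = 0 :=
    fun y hy i hi => hA (pdW S χ 0) (fun t ht => hslip t ht) y hy (du 0 y (hΓS hy)) i hi
  have hwsym : ∀ y ∈ S, ∀ i j, pdW S (pdW S χ i) j y = pdW S (pdW S χ j) i y :=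
    fun y hy i j => hsymm χ (hχ.of_le (by norm_num)) y hy
      (EuclideanSpace.single i 1) (EuclideanSpace.single j 1)
  -- ## χ_{1ij} = 0 on Γ for tangential i, j
  have hT2 : ∀ y ∈ Γ, ∀ i j : Fin (d + 2), i ≠ 0 → j ≠ 0 →
      fderivWithin ℝ (pdW S (pdW S χ i) j) S y
        (EuclideanSpace.single (0 : Fin (d + 2)) 1) = 0 := by
    intro y hy i j hi hj
    have hyS := hΓS hy
    have e1 : fderivWithin ℝ (pdW S (pdW S χ i) j) S y
          (EuclideanSpace.single (0 : Fin (d + 2)) 1)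
        = fderivWithin ℝ (pdW S (pdW S χ i) 0) S y (EuclideanSpace.single j 1) :=
      hsymm (pdW S χ i) (hu2 i) y hyS (EuclideanSpace.single j 1)
        (EuclideanSpace.single (0 : Fin (d + 2)) 1)
    have e2 : fderivWithin ℝ (pdW S (pdW S χ i) 0) S y
        = fderivWithin ℝ (pdW S (pdW S χ 0) i) S y :=
      fderivWithin_congr (fun t ht => hwsym t ht i 0) (hwsym y hyS i 0)
    rw [e1, e2]
    exact hA (pdW S (pdW S χ 0) i) (fun t ht => hT1 t ht i hi) y hy (dw 0 i y hyS) j hj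
  -- ## Main computation at a point of Γ
  intro x hxΓ
  have hxS : x ∈ S := hΓS hxΓ
  have hUDx : UniqueDiffWithinAt ℝ S x := hUD x hxS
  have k1 : pdW S χ 0 x = 0 := hslip x hxΓ
  have k2 : ∀ i : Fin (d + 2), i ≠ 0 →
      fderivWithin ℝ (pdW S χ i) S x (EuclideanSpace.single (0 : Fin (d + 2)) 1) = 0 := by
    intro i hi
    have h : pdW S (pdW S χ i) 0 x = 0 := by
      rw [hwsym x hxS i 0]; exact hT1 x hxΓ i hi
    exact h
  -- derivative-in-direction-e₀ helper lemmas
  have Dmul : ∀ f g : EuclideanSpace ℝ (Fin (d + 2)) → ℝ,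
      DifferentiableWithinAt ℝ f S x → DifferentiableWithinAt ℝ g S x →
      fderivWithin ℝ (fun y => f y * g y) S x (EuclideanSpace.single (0 : Fin (d + 2)) 1)
        = f x * fderivWithin ℝ g S x (EuclideanSpace.single (0 : Fin (d + 2)) 1)
          + g x * fderivWithin ℝ f S x (EuclideanSpace.single (0 : Fin (d + 2)) 1) := by
    intro f g hf hg
    rw [fderivWithin_fun_mul hUDx hf hg]
    simp
  have Dadd : ∀ f g : EuclideanSpace ℝ (Fin (d + 2)) → ℝ,
      DifferentiableWithinAt ℝ f S x → DifferentiableWithinAt ℝ g S x →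
      fderivWithin ℝ (fun y => f y + g y) S x (EuclideanSpace.single (0 : Fin (d + 2)) 1)
        = fderivWithin ℝ f S x (EuclideanSpace.single (0 : Fin (d + 2)) 1)
          + fderivWithin ℝ g S x (EuclideanSpace.single (0 : Fin (d + 2)) 1) := by
    intro f g hf hg
    rw [fderivWithin_fun_add hUDx hf hg]
    simp
  have Dsub : ∀ f g : EuclideanSpace ℝ (Fin (d + 2)) → ℝ,
      DifferentiableWithinAt ℝ f S x → DifferentiableWithinAt ℝ g S x →
      fderivWithin ℝ (fun y => f y - g y) S x (EuclideanSpace.single (0 : Fin (d + 2)) 1)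
        = fderivWithin ℝ f S x (EuclideanSpace.single (0 : Fin (d + 2)) 1)
          - fderivWithin ℝ g S x (EuclideanSpace.single (0 : Fin (d + 2)) 1) := by
    intro f g hf hg
    rw [fderivWithin_fun_sub hUDx hf hg]
    simp
  have Dcmul : ∀ (f : EuclideanSpace ℝ (Fin (d + 2)) → ℝ) (c : ℝ),
      DifferentiableWithinAt ℝ f S x →
      fderivWithin ℝ (fun y => c * f y) S x (EuclideanSpace.single (0 : Fin (d + 2)) 1)
        = c * fderivWithin ℝ f S x (EuclideanSpace.single (0 : Fin (d + 2)) 1) := by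
    intro f c hf
    rw [fderivWithin_const_mul hUDx hf]
    simp
  have Dsum : ∀ F : Fin (d + 2) → EuclideanSpace ℝ (Fin (d + 2)) → ℝ,
      (∀ i, DifferentiableWithinAt ℝ (F i) S x) →
      fderivWithin ℝ (fun y => ∑ i, F i y) S x (EuclideanSpace.single (0 : Fin (d + 2)) 1)
        = ∑ i, fderivWithin ℝ (F i) S x (EuclideanSpace.single (0 : Fin (d + 2)) 1) := by
    intro F hF
    rw [fderivWithin_fun_sum hUDx fun i _ => hF i]
    simp
  -- differentiability of the pieces
  have dG : DifferentiableWithinAt ℝ (fun y => ∑ i, (pdW S χ i y) ^ 2) S x :=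
    DifferentiableWithinAt.fun_sum fun i _ => (du i x hxS).pow 2
  have dA : DifferentiableWithinAt ℝ (fun y => ∑ i, pdW S (pdW S χ i) i y) S x :=
    DifferentiableWithinAt.fun_sum fun i _ => dw i i x hxS
  have dB : DifferentiableWithinAt ℝ
      (fun y => ∑ i, ∑ j, pdW S χ i y * pdW S χ j y * pdW S (pdW S χ i) j y) S x :=
    DifferentiableWithinAt.fun_sum fun i _ => DifferentiableWithinAt.fun_sum fun j _ =>
      ((du i x hxS).mul (du j x hxS)).mul (dw i j x hxS)
  have dc2f : DifferentiableWithinAt ℝ c2f S x := by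
    have h : (fun y => (1 - γ) * (χ y + (∑ i, (pdW S χ i y) ^ 2) / 2))
        = fun y => (1 - γ) * χ y + ((1 - γ) / 2) * ∑ i, (pdW S χ i y) ^ 2 := by
      funext y; ring
    rw [hc2f, h]
    exact ((dchi x hxS).const_mul _).add (dG.const_mul _)
  -- D(gradSq) = 0 at x
  have DG : fderivWithin ℝ (fun y => ∑ i, (pdW S χ i y) ^ 2) S x
      (EuclideanSpace.single (0 : Fin (d + 2)) 1) = 0 := by
    rw [Dsum (fun i y => (pdW S χ i y) ^ 2) fun i => (du i x hxS).pow 2]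
    apply Finset.sum_eq_zero
    intro i _
    have hsq : (fun y => (pdW S χ i y) ^ 2) = fun y => pdW S χ i y * pdW S χ i y := by
      funext y; ring
    rw [hsq, Dmul _ _ (du i x hxS) (du i x hxS)]
    by_cases hi : i = 0
    · subst hi; rw [k1]; ring
    · rw [k2 i hi]; ring
  -- D(c2f) = 0 at x
  have Dc2f : fderivWithin ℝ c2f S x (EuclideanSpace.single (0 : Fin (d + 2)) 1) = 0 := by
    have hc2feq : c2f = fun y =>
        (1 - γ) * (χ y + (∑ i, (pdW S χ i y) ^ 2) * (1 / 2)) := by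
      rw [hc2f]; funext y; ring
    have dinner : DifferentiableWithinAt ℝ
        (fun y => χ y + (∑ i, (pdW S χ i y) ^ 2) * (1 / 2)) S x :=
      (dchi x hxS).add (dG.mul_const _)
    rw [hc2feq, Dcmul _ _ dinner,
      Dadd _ _ (dchi x hxS) (dG.mul_const (1 / 2))]
    have hhalf : (fun y => (∑ i, (pdW S χ i y) ^ 2) * (1 / 2))
        = fun y => (1 / 2) * (∑ i, (pdW S χ i y) ^ 2) := by funext y; ring
    rw [hhalf, Dcmul _ _ dG, DG]
    have hχ0 : fderivWithin ℝ χ S x (EuclideanSpace.single (0 : Fin (d + 2)) 1) = 0 := k1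
    rw [hχ0]
    ring
  -- D(Δχ) = χ₀₀₀ at x
  have DA : fderivWithin ℝ (fun y => ∑ i, pdW S (pdW S χ i) i y) S x
      (EuclideanSpace.single (0 : Fin (d + 2)) 1)
      = pdW S (pdW S (pdW S χ 0) 0) 0 x := by
    rw [Dsum (fun i y => pdW S (pdW S χ i) i y) fun i => dw i i x hxS]
    rw [Finset.sum_eq_single (0 : Fin (d + 2))]
    · rfl
    · intro i _ hi
      exact hT2 x hxΓ i i hi hi
    · intro h; exact absurd (Finset.mem_univ _) h
  -- D(B) = 0 at x
  have DB : fderivWithin ℝ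
      (fun y => ∑ i, ∑ j, pdW S χ i y * pdW S χ j y * pdW S (pdW S χ i) j y) S x
      (EuclideanSpace.single (0 : Fin (d + 2)) 1) = 0 := by
    rw [Dsum (fun i y => ∑ j, pdW S χ i y * pdW S χ j y * pdW S (pdW S χ i) j y)
      fun i => DifferentiableWithinAt.fun_sum fun j _ =>
        ((du i x hxS).mul (du j x hxS)).mul (dw i j x hxS)]
    apply Finset.sum_eq_zero
    intro i _
    rw [Dsum (fun j y => pdW S χ i y * pdW S χ j y * pdW S (pdW S χ i) j y)
      fun j => ((du i x hxS).mul (du j x hxS)).mul (dw i j x hxS)]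
    apply Finset.sum_eq_zero
    intro j _
    rw [Dmul (fun y => pdW S χ i y * pdW S χ j y) (pdW S (pdW S χ i) j)
      ((du i x hxS).mul (du j x hxS)) (dw i j x hxS),
      Dmul _ _ (du i x hxS) (du j x hxS)]
    by_cases hi : i = 0
    · subst hi
      by_cases hj : j = 0
      · subst hj; simp [k1]
      · simp [k1, hT1 x hxΓ j hj, k2 j hj]
    · by_cases hj : j = 0
      · subst hj
        have hwi0 : pdW S (pdW S χ i) 0 x = 0 := by
          rw [hwsym x hxS i 0]; exact hT1 x hxΓ i hi
        simp [k1, hwi0, k2 i hi]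
      · simp [k2 i hi, k2 j hj, hT2 x hxΓ i j hi hj]
  -- The PDE as a vanishing function on S
  have hF0 : Set.EqOn
      (fun y => (c2f y * (∑ i, pdW S (pdW S χ i) i y)
          - ∑ i, ∑ j, pdW S χ i y * pdW S χ j y * pdW S (pdW S χ i) j y)
        - ((∑ i, (pdW S χ i y) ^ 2) - ((d : ℝ) + 2) * c2f y))
      (fun _ => (0 : ℝ)) S := by
    intro y hy
    have h := hpde y hy
    simp only []
    linarith
  have hDF : fderivWithin ℝ
      (fun y => (c2f y * (∑ i, pdW S (pdW S χ i) i y)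
          - ∑ i, ∑ j, pdW S χ i y * pdW S χ j y * pdW S (pdW S χ i) j y)
        - ((∑ i, (pdW S χ i y) ^ 2) - ((d : ℝ) + 2) * c2f y)) S x
      (EuclideanSpace.single (0 : Fin (d + 2)) 1) = 0 := by
    rw [fderivWithin_congr hF0 (hF0 hxS), fderivWithin_const_apply _]
    simp
  -- Expand hDF
  have dP1 : DifferentiableWithinAt ℝ
      (fun y => c2f y * (∑ i, pdW S (pdW S χ i) i y)) S x := dc2f.mul dA
  have dP : DifferentiableWithinAt ℝ
      (fun y => c2f y * (∑ i, pdW S (pdW S χ i) i y)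
        - ∑ i, ∑ j, pdW S χ i y * pdW S χ j y * pdW S (pdW S χ i) j y) S x := dP1.sub dB
  have dQ2 : DifferentiableWithinAt ℝ (fun y => ((d : ℝ) + 2) * c2f y) S x :=
    dc2f.const_mul _
  have dQ : DifferentiableWithinAt ℝ
      (fun y => (∑ i, (pdW S χ i y) ^ 2) - ((d : ℝ) + 2) * c2f y) S x := dG.sub dQ2
  rw [Dsub _ _ dP dQ, Dsub _ _ dP1 dB, Dsub _ _ dG dQ2,
    Dmul _ _ dc2f dA, Dcmul _ _ dc2f, DA, DB, DG, Dc2f] at hDF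
  simp only [mul_zero, add_zero, sub_zero, zero_sub, sub_neg_eq_add, zero_add,
    neg_zero] at hDF
  -- hDF : c2f x * χ₀₀₀ = 0 (up to simp normal form); conclude
  have hpos := hc2pos x hxS
  rcases mul_eq_zero.mp hDF with h | h
  · exact absurd h hpos.ne'
  · exact h
end

section
/- For d ≥ 2 and γ > −1, the self-similar potential flow equation c²Δχ − Σ_{i,j} χ_i χ_j χ_{ij} = |∇χ|² − d·c² with c² = (1−γ)(χ + |∇χ|²/2) > 0 admits no C³ solution that is parabolic (L = |∇χ|/c = 1) on a nonempty open set. -/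
open scoped BigOperators

section helpers

variable {m : ℕ} {f g : EuclideanSpace ℝ (Fin m) → ℝ} {x : EuclideanSpace ℝ (Fin m)}
  {i j : Fin m} {V : Set (EuclideanSpace ℝ (Fin m))}

lemma pd_congr (h : f =ᶠ[nhds x] g) : pd f i x = pd g i x := by
  unfold pd; rw [h.fderiv_eq]

lemma pd_eq_of_eqOn (hV : IsOpen V) (hx : x ∈ V) (h : ∀ y ∈ V, f y = g y) :
    pd f i x = pd g i x := by
  refine pd_congr ?_
  filter_upwards [hV.mem_nhds hx] with y hy using h y hy

lemma pd_const (c : ℝ) : pd (fun _ => c) i x = 0 := by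
  simp [pd]

lemma pd_add (hf : DifferentiableAt ℝ f x) (hg : DifferentiableAt ℝ g x) :
    pd (fun y => f y + g y) i x = pd f i x + pd g i x := by
  unfold pd; rw [fderiv_fun_add hf hg]; rfl

lemma pd_sum {ι : Type*} (s : Finset ι) (F : ι → EuclideanSpace ℝ (Fin m) → ℝ)
    (h : ∀ k ∈ s, DifferentiableAt ℝ (F k) x) :
    pd (fun y => ∑ k ∈ s, F k y) i x = ∑ k ∈ s, pd (F k) i x := by
  unfold pd; rw [fderiv_fun_sum h]; simp

lemma pd_mul (hf : DifferentiableAt ℝ f x) (hg : DifferentiableAt ℝ g x) :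
    pd (fun y => f y * g y) i x = pd f i x * g x + f x * pd g i x := by
  unfold pd; rw [fderiv_fun_mul hf hg]; simp; ring

lemma pd_const_mul (hf : DifferentiableAt ℝ f x) (c : ℝ) :
    pd (fun y => c * f y) i x = c * pd f i x := by
  unfold pd; rw [fderiv_const_mul hf]; simp

lemma pd_div_const (hf : DifferentiableAt ℝ f x) (c : ℝ) :
    pd (fun y => f y / c) i x = pd f i x / c := by
  have h : (fun y => f y / c) = fun y => c⁻¹ * f y := by
    funext y; rw [div_eq_inv_mul]
  rw [h, pd_const_mul hf, div_eq_inv_mul]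

lemma pd_sq (hf : DifferentiableAt ℝ f x) :
    pd (fun y => f y ^ 2) i x = 2 * f x * pd f i x := by
  simp only [pow_two]
  rw [pd_mul hf hf]; ring

lemma contDiffOn_pd {n : ℕ∞} (hV : IsOpen V) (hf : ContDiffOn ℝ (n + 1) f V) :
    ContDiffOn ℝ n (pd f i) V := by
  have h1 : ContDiffOn ℝ n (fun y => fderiv ℝ f y) V := hf.fderiv_of_isOpen hV le_rfl
  exact h1.clm_apply contDiffOn_const

lemma pd_pd_symm (hV : IsOpen V) (hx : x ∈ V) (hf : ContDiffOn ℝ 2 f V) :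
    pd (pd f i) j x = pd (pd f j) i x := by
  have hfx : ContDiffAt ℝ 2 f x := (hf x hx).contDiffAt (hV.mem_nhds hx)
  have hsym := hfx.isSymmSndFDerivAt (by simp)
  have hd : DifferentiableAt ℝ (fderiv ℝ f) x :=
    (hfx.fderiv_right (m := 1) le_rfl).differentiableAt one_ne_zero
  have key : ∀ a b : Fin m, pd (pd f a) b x
      = fderiv ℝ (fderiv ℝ f) x (EuclideanSpace.single b 1) (EuclideanSpace.single a 1) := by
    intro a b
    show fderiv ℝ (fun y => fderiv ℝ f y (EuclideanSpace.single a 1)) x _ = _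
    rw [fderiv_clm_apply hd (differentiableAt_const _)]
    simp
  rw [key i j, key j i, hsym.eq]

end helpers

lemma frob_lower (d : ℕ) (M : Fin (d + 2) → Fin (d + 2) → ℝ) (v : Fin (d + 2) → ℝ) (lam : ℝ)
    (hv : ∑ i, v i ^ 2 = 1) (hev : ∀ j, ∑ i, v i * M i j = lam * v j) :
    lam ^ 2 + (∑ i, M i i - lam) ^ 2 / (d + 1) ≤ ∑ i, ∑ j, M i j ^ 2 := by
  set t : ℝ := ∑ i, M i i with ht
  have hd1 : (0 : ℝ) < (d : ℝ) + 1 := by positivity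
  set μ : ℝ := (t - lam) / ((d : ℝ) + 1) with hμ
  set c : ℝ := lam - μ with hc
  have hμ1 : μ * ((d : ℝ) + 1) = t - lam := by
    rw [hμ, div_mul_cancel₀ _ (ne_of_gt hd1)]
  have hsq : (t - lam) ^ 2 / ((d : ℝ) + 1) = μ ^ 2 * ((d : ℝ) + 1) := by
    rw [← hμ1]; field_simp
  have expand : ∀ j, ∑ i, (M i j - c * v i * v j - μ * (if i = j then 1 else 0)) ^ 2
      = (∑ i, M i j ^ 2) + c ^ 2 * v j ^ 2 - 2 * c * lam * v j ^ 2
        + (μ ^ 2 - 2 * μ * M j j + 2 * c * μ * v j ^ 2) := by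
    intro j
    have hpt : ∀ i, (M i j - c * v i * v j - μ * (if i = j then 1 else 0)) ^ 2
        = M i j ^ 2 + (c ^ 2 * v j ^ 2) * v i ^ 2 - (2 * c * v j) * (v i * M i j)
          + (if i = j then μ ^ 2 - 2 * μ * M i j + 2 * c * μ * (v i * v j) else 0) := by
      intro i
      split_ifs with h
      · subst h; ring
      · ring
    rw [Finset.sum_congr rfl fun i _ => hpt i]
    rw [Finset.sum_add_distrib, Finset.sum_sub_distrib, Finset.sum_add_distrib,
      ← Finset.mul_sum, ← Finset.mul_sum, hv, hev j, Finset.sum_ite_eq' Finset.univ j]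
    simp only [Finset.mem_univ, if_true]
    ring
  have key : (0 : ℝ) ≤ ∑ j, ∑ i, (M i j - c * v i * v j - μ * (if i = j then 1 else 0)) ^ 2 :=
    Finset.sum_nonneg fun j _ => Finset.sum_nonneg fun i _ => sq_nonneg _
  rw [Finset.sum_congr rfl fun j _ => expand j] at key
  rw [Finset.sum_add_distrib, Finset.sum_sub_distrib, Finset.sum_add_distrib,
    Finset.sum_add_distrib, Finset.sum_sub_distrib, ← Finset.mul_sum, ← Finset.mul_sum,
    ← Finset.mul_sum, ← Finset.mul_sum, hv] at key
  have hcard : ∑ _j : Fin (d + 2), (μ ^ 2 : ℝ) = μ ^ 2 * ((d : ℝ) + 2) := by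
    rw [Finset.sum_const]
    simp [Finset.card_univ, mul_comm]
  have hcomm : ∑ j : Fin (d + 2), ∑ i, M i j ^ 2 = ∑ i, ∑ j, M i j ^ 2 := Finset.sum_comm
  rw [hcomm, hcard] at key
  rw [hsq]
  have e : c ^ 2 - 2 * c * lam + 2 * c * μ = -(lam ^ 2) + 2 * lam * μ - μ ^ 2 := by
    rw [hc]; ring
  have e2 : 2 * μ * t - 2 * μ * lam = 2 * (μ ^ 2) * ((d : ℝ) + 1) := by
    rw [show (2:ℝ) * μ * t - 2 * μ * lam = 2 * μ * (t - lam) by ring, ← hμ1]; ring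
  rw [← ht] at key
  nlinarith [key, e, e2]

theorem stmt14_no_open_parabolic_region
    (d : ℕ) (γ : ℝ) (hγ : -1 < γ)
    (Ω : Set (EuclideanSpace ℝ (Fin (d + 2)))) (hΩ : IsOpen Ω)
    (χ : EuclideanSpace ℝ (Fin (d + 2)) → ℝ) (hχ : ContDiffOn ℝ 3 χ Ω)
    (hsol : ∀ x ∈ Ω, SolvesSSPF γ χ x)
    (hc2 : ∀ x ∈ Ω, 0 < c2 γ χ x) :
    ¬∃ V : Set (EuclideanSpace ℝ (Fin (d + 2))),
      IsOpen V ∧ V.Nonempty ∧ V ⊆ Ω ∧ ∀ x ∈ V, gradSq χ x = c2 γ χ x := by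
  rintro ⟨V, hVo, ⟨x₀, hx₀⟩, hVΩ, hpar⟩
  have hχV : ContDiffOn ℝ 3 χ V := hχ.mono hVΩ
  have hγ1 : (0 : ℝ) < 1 + γ := by linarith
  set lam : ℝ := (1 - γ) / (1 + γ) with hlam
  -- regularity
  have h2χ : ContDiffOn ℝ 2 χ V := hχV.of_le (by norm_num)
  have h1 : ∀ i, ContDiffOn ℝ 2 (pd χ i) V := by
    intro i
    refine contDiffOn_pd hVo ?_
    exact hχV.of_le (by norm_num)
  have h2 : ∀ i j, ContDiffOn ℝ 1 (pd (pd χ i) j) V := by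
    intro i j
    refine contDiffOn_pd hVo ?_
    exact (h1 i).of_le (by norm_num)
  have dχ : ∀ x ∈ V, DifferentiableAt ℝ χ x := fun x hx =>
    ((h2χ.of_le one_le_two).differentiableOn one_ne_zero).differentiableAt (hVo.mem_nhds hx)
  have d1 : ∀ i, ∀ x ∈ V, DifferentiableAt ℝ (pd χ i) x := fun i x hx =>
    (((h1 i).of_le one_le_two).differentiableOn one_ne_zero).differentiableAt (hVo.mem_nhds hx)
  have d2 : ∀ i j, ∀ x ∈ V, DifferentiableAt ℝ (pd (pd χ i) j) x := fun i j x hx =>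
    ((h2 i j).differentiableOn one_ne_zero).differentiableAt (hVo.mem_nhds hx)
  have hgs : gradSq χ = fun y => ∑ i, pd χ i y ^ 2 := rfl
  have hc2f : c2 γ χ = fun y => (1 - γ) * (χ y + gradSq χ y / 2) := rfl
  have dgs : ∀ x ∈ V, DifferentiableAt ℝ (gradSq χ) x := by
    intro x hx
    rw [hgs]
    exact DifferentiableAt.fun_sum fun i _ => (d1 i x hx).pow 2
  -- Step A : eigen relation
  have stepA : ∀ x ∈ V, ∀ j, ∑ i, pd χ i x * pd (pd χ i) j x = lam * pd χ j x := by
    intro x hx j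
    have hL : pd (gradSq χ) j x = ∑ i, 2 * pd χ i x * pd (pd χ i) j x := by
      rw [hgs, pd_sum Finset.univ (fun i y => pd χ i y ^ 2) (fun i _ => (d1 i x hx).pow 2)]
      exact Finset.sum_congr rfl fun i _ => pd_sq (d1 i x hx)
    have hR : pd (c2 γ χ) j x = (1 - γ) * (pd χ j x + pd (gradSq χ) j x / 2) := by
      have hdiv : DifferentiableAt ℝ (fun y => gradSq χ y / 2) x := by
        simp only [div_eq_inv_mul]
        exact (dgs x hx).const_mul _
      rw [hc2f, pd_const_mul (f := fun y => χ y + gradSq χ y / 2) ((dχ x hx).add hdiv) (1 - γ),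
        pd_add (dχ x hx) hdiv, pd_div_const (dgs x hx) 2]
    have heq : pd (gradSq χ) j x = pd (c2 γ χ) j x := pd_eq_of_eqOn hVo hx hpar
    have hS : ∑ i, 2 * pd χ i x * pd (pd χ i) j x
        = 2 * ∑ i, pd χ i x * pd (pd χ i) j x := by
      rw [Finset.mul_sum]; exact Finset.sum_congr rfl fun i _ => by ring
    rw [hL, hR, hL, hS] at heq
    rw [hlam]
    have h2' : (1 + γ) * (∑ i, pd χ i x * pd (pd χ i) j x) = (1 - γ) * pd χ j x := by
      linarith [heq]
    field_simp
    linarith [h2']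
  -- Step B : constant trace
  set a : ℝ := 1 - ((d : ℝ) + 2) + lam with ha
  have stepB : ∀ x ∈ V, ∑ i, pd (pd χ i) i x = a := by
    intro x hx
    have hc2pos := hc2 x (hVΩ hx)
    have hs := hsol x (hVΩ hx)
    unfold SolvesSSPF at hs
    have hcross : ∑ i, ∑ j, pd χ i x * pd χ j x * pd (pd χ i) j x = lam * c2 γ χ x := by
      rw [Finset.sum_comm]
      have e1 : ∀ j : Fin (d + 2), ∑ i, pd χ i x * pd χ j x * pd (pd χ i) j x
          = pd χ j x * (lam * pd χ j x) := by
        intro j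
        rw [← stepA x hx j, Finset.mul_sum]
        exact Finset.sum_congr rfl fun i _ => by ring
      rw [Finset.sum_congr rfl fun j _ => e1 j]
      have : ∑ j : Fin (d + 2), pd χ j x * (lam * pd χ j x) = lam * ∑ j, pd χ j x ^ 2 := by
        rw [Finset.mul_sum]; exact Finset.sum_congr rfl fun j _ => by ring
      rw [this, show (∑ j, pd χ j x ^ 2) = gradSq χ x from rfl, hpar x hx]
    rw [hcross, hpar x hx] at hs
    have h2' : c2 γ χ x * (∑ i, pd (pd χ i) i x) = c2 γ χ x * a := by
      rw [ha]
      push_cast at hs ⊢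
      ring_nf
      ring_nf at hs
      linarith [hs]
    exact mul_left_cancel₀ (ne_of_gt hc2pos) h2'
  -- Step C : divergence of Hessian rows vanishes
  have stepC : ∀ i, ∑ j, pd (pd (pd χ i) j) j x₀ = 0 := by
    intro i
    have e1 : ∀ j, pd (pd (pd χ i) j) j x₀ = pd (pd (pd χ j) j) i x₀ := by
      intro j
      have s1 : pd (pd (pd χ i) j) j x₀ = pd (pd (pd χ j) i) j x₀ :=
        pd_eq_of_eqOn hVo hx₀ (fun y hy => pd_pd_symm hVo hy h2χ)
      have s2 : pd (pd (pd χ j) i) j x₀ = pd (pd (pd χ j) j) i x₀ :=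
        pd_pd_symm hVo hx₀ (h1 j)
      rw [s1, s2]
    rw [Finset.sum_congr rfl fun j _ => e1 j]
    have e2 : ∑ j, pd (pd (pd χ j) j) i x₀
        = pd (fun y => ∑ j, pd (pd χ j) j y) i x₀ :=
      (pd_sum Finset.univ (fun j y => pd (pd χ j) j y) (fun j _ => d2 j j x₀ hx₀)).symm
    rw [e2, pd_eq_of_eqOn (g := fun _ => a) hVo hx₀ (fun y hy => stepB y hy), pd_const]
  -- Step D : Frobenius norm identity
  have stepD : ∑ i, ∑ j, (pd (pd χ i) j x₀) ^ 2 = lam * a := by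
    have hj : ∀ j : Fin (d + 2),
        ∑ i, ((pd (pd χ i) j x₀) ^ 2 + pd χ i x₀ * pd (pd (pd χ i) j) j x₀)
          = lam * pd (pd χ j) j x₀ := by
      intro j
      have hLfun : pd (fun y => ∑ i, pd χ i y * pd (pd χ i) j y) j x₀
          = ∑ i, (pd (pd χ i) j x₀ * pd (pd χ i) j x₀
              + pd χ i x₀ * pd (pd (pd χ i) j) j x₀) := by
        rw [pd_sum Finset.univ (fun i y => pd χ i y * pd (pd χ i) j y)
          (fun i _ => (d1 i x₀ hx₀).mul (d2 i j x₀ hx₀))]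
        exact Finset.sum_congr rfl fun i _ => pd_mul (d1 i x₀ hx₀) (d2 i j x₀ hx₀)
      have hRfun : pd (fun y => lam * pd χ j y) j x₀ = lam * pd (pd χ j) j x₀ :=
        pd_const_mul (d1 j x₀ hx₀) lam
      have heq : pd (fun y => ∑ i, pd χ i y * pd (pd χ i) j y) j x₀
          = pd (fun y => lam * pd χ j y) j x₀ :=
        pd_eq_of_eqOn hVo hx₀ (fun y hy => stepA y hy j)
      rw [hLfun, hRfun] at heq
      rw [← heq]
      exact Finset.sum_congr rfl fun i _ => by ring
    have hsump : ∑ j : Fin (d + 2),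
        ∑ i, ((pd (pd χ i) j x₀) ^ 2 + pd χ i x₀ * pd (pd (pd χ i) j) j x₀)
        = ∑ j : Fin (d + 2), lam * pd (pd χ j) j x₀ :=
      Finset.sum_congr rfl fun j _ => hj j
    rw [← Finset.mul_sum, stepB x₀ hx₀] at hsump
    rw [Finset.sum_congr rfl (fun j (_ : j ∈ Finset.univ) => Finset.sum_add_distrib
      (f := fun i => (pd (pd χ i) j x₀) ^ 2)
      (g := fun i => pd χ i x₀ * pd (pd (pd χ i) j) j x₀))] at hsump
    rw [Finset.sum_add_distrib] at hsump
    have hzero : ∑ j : Fin (d + 2), ∑ i, pd χ i x₀ * pd (pd (pd χ i) j) j x₀ = 0 := by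
      rw [Finset.sum_comm]
      have : ∀ i : Fin (d + 2), ∑ j, pd χ i x₀ * pd (pd (pd χ i) j) j x₀
          = pd χ i x₀ * ∑ j, pd (pd (pd χ i) j) j x₀ := fun i => (Finset.mul_sum _ _ _).symm
      rw [Finset.sum_congr rfl fun i _ => this i]
      simp [stepC]
    rw [hzero, add_zero, Finset.sum_comm] at hsump
    exact hsump
  -- Step E : conclusion via frob_lower
  have hc2pos : 0 < c2 γ χ x₀ := hc2 x₀ (hVΩ hx₀)
  set s : ℝ := Real.sqrt (c2 γ χ x₀) with hsdef
  have hspos : 0 < s := Real.sqrt_pos.mpr hc2pos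
  have hs2 : s ^ 2 = c2 γ χ x₀ := Real.sq_sqrt (le_of_lt hc2pos)
  set v : Fin (d + 2) → ℝ := fun i => pd χ i x₀ / s with hvdef
  have hv : ∑ i, v i ^ 2 = 1 := by
    rw [hvdef]
    simp only [div_pow]
    rw [← Finset.sum_div, show (∑ i, pd χ i x₀ ^ 2) = gradSq χ x₀ from rfl, hpar x₀ hx₀, hs2]
    field_simp
  have hev : ∀ j, ∑ i, v i * pd (pd χ i) j x₀ = lam * v j := by
    intro j
    rw [hvdef]
    simp only [div_mul_eq_mul_div]
    rw [← Finset.sum_div, stepA x₀ hx₀ j]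
    ring
  have hfrob := frob_lower d (fun i j => pd (pd χ i) j x₀) v lam hv hev
  rw [stepD, stepB x₀ hx₀] at hfrob
  have hd1 : (0 : ℝ) < (d : ℝ) + 1 := by positivity
  have htr : a - lam = -((d : ℝ) + 1) := by rw [ha]; ring
  rw [htr] at hfrob
  have hq : (-((d : ℝ) + 1)) ^ 2 / ((d : ℝ) + 1) = (d : ℝ) + 1 := by
    field_simp
  rw [hq] at hfrob
  have hla : lam * a = lam ^ 2 - lam * ((d : ℝ) + 1) := by rw [ha]; ring
  rw [hla] at hfrob
  -- hfrob : lam ^ 2 + (d + 1) ≤ lam ^ 2 - lam * (d + 1)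
  have hlampos : 0 < 1 + lam := by
    rw [hlam]
    have : 1 + (1 - γ) / (1 + γ) = 2 / (1 + γ) := by field_simp; ring
    rw [this]
    positivity
  nlinarith [mul_pos hd1 hlampos]
end
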